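/- arXiv:1502.00013 — 5 statements merged into one kernel-verified Lean document; each statement's English description precedes it below -/
import Mathlib

section
/- Let κ ∈ (−1,1)∖{0}, let k ≥ 1 and m ≥ 0 be integers, and let r ∈ (0, |κ|). Then (−1)^m P_k^{(m)}(κ²) = (κ/(2πi)) ∮_{|w−κ|=r} w^{m−1}(1−w²)^k/(w−κ)^{m+1} dw, where the contour is the positively oriented circle of radius r centered at κ. -/
open scoped BigOperators

/-- Pochhammer symbol `(a)_k = a(a+1)⋯(a+k-1)` over ℝ. -/
noncomputable def pochR (a : ℝ) (k : ℕ) : ℝ := ∏ i ∈ Finset.range k, (a + i)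

/-- The polynomials `P_n^{(m)}(ε) = ((-1)^m/m!) Σ_{k=0}^n C(n,k) (-ε)^k (2k)_m`. -/
noncomputable def Ppoly (n m : ℕ) (ε : ℝ) : ℝ :=
  ((-1 : ℝ) ^ m / (m.factorial : ℝ)) * ∑ k ∈ Finset.range (n + 1),
    (n.choose k : ℝ) * (-ε) ^ k * pochR (2 * k) m

/-! By Cauchy's formula the integral is `2πi f⁽ᵐ⁾(κ) / m!` for `f(w) = w^(m-1) (1 - w²)^k`, which is
holomorphic on the disc since the disc avoids `0`. Expanding `(1 - w²)^k` binomially makes `f` a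
sum of powers `w^(2j+m-1)`, whose `m`-th derivatives at `κ` are
`(2j+m-1)(2j+m-2)⋯(2j) κ^(2j-1) = (2j)_m κ^(2j-1)`. -/

open Complex Finset Metric Real

theorem pochR_eq_prod_range_sub (a : ℝ) (m : ℕ) :
    pochR a m = ∏ i ∈ range m, (a + m - 1 - i) := by
  rw [pochR, ← prod_range_reflect]
  refine prod_congr rfl fun i hi => ?_
  have hi : i < m := mem_range.1 hi
  rw [Nat.cast_sub (by omega), Nat.cast_sub (by omega)]
  push_cast
  ring

theorem neg_one_pow_mul_Ppoly (n m : ℕ) (ε : ℝ) :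
    (-1) ^ m * Ppoly n m ε =
      (m.factorial : ℝ)⁻¹ * ∑ j ∈ range (n + 1), (n.choose j : ℝ) * (-ε) ^ j * pochR (2 * j) m := by
  rw [Ppoly, ← mul_assoc, mul_div_assoc', ← pow_add, ← two_mul, pow_mul, neg_one_sq, one_pow,
    one_div]

theorem zpow_sub_one_mul_one_sub_sq_pow {K : Type*} [Field K] (w : K) (m k : ℕ) :
    w ^ ((m : ℤ) - 1) * (1 - w ^ 2) ^ k =
      ∑ j ∈ range (k + 1), (-1) ^ j * (k.choose j : K) * w ^ (2 * (j : ℤ) + m - 1) := by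
  rw [← neg_add_eq_sub (w ^ 2), add_pow, mul_sum]
  refine sum_congr rfl fun j _ => ?_
  -- `zpow_add'` needs no `w ≠ 0`: the exponents `2j` and `m - 1` only sum to `0` when both vanish
  rw [add_sub_assoc, zpow_add' (Or.inr (by omega)), zpow_mul, zpow_natCast, zpow_ofNat, neg_pow]
  ring

theorem iteratedDeriv_zpow_sub_one_mul_one_sub_sq_pow {𝕜 : Type*} [NontriviallyNormedField 𝕜]
    [CompleteSpace 𝕜] {c : 𝕜} (hc : c ≠ 0) (m k : ℕ) :
    iteratedDeriv m (fun w : 𝕜 => w ^ ((m : ℤ) - 1) * (1 - w ^ 2) ^ k) c =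
      ∑ j ∈ range (k + 1), (-1) ^ j * (k.choose j : 𝕜) *
        ((∏ i ∈ range m, ((2 * j + m - 1 : 𝕜) - i)) * c ^ (2 * (j : ℤ) - 1)) := by
  simp_rw [zpow_sub_one_mul_one_sub_sq_pow]
  rw [iteratedDeriv_fun_sum
    (f := fun j w => (-1) ^ j * (k.choose j : 𝕜) * w ^ (2 * (j : ℤ) + m - 1))
    fun j _ => contDiffAt_const.mul (analyticAt_id.zpow hc).contDiffAt]
  refine sum_congr rfl fun j _ => ?_
  rw [iteratedDeriv_const_mul_field, iteratedDeriv_eq_iterate, iter_deriv_zpow]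
  push_cast
  ring_nf

theorem circleIntegral_zpow_sub_one_mul_one_sub_sq_pow_div_sub_pow {c : ℂ} {r : ℝ}
    (hr : 0 < r) (hrc : r < ‖c‖) (m k : ℕ) :
    (∮ w in C(c, r), w ^ ((m : ℤ) - 1) * (1 - w ^ 2) ^ k / (w - c) ^ (m + 1)) =
      (2 * π * I / m.factorial) * ∑ j ∈ range (k + 1), (-1) ^ j * (k.choose j : ℂ) *
        ((∏ i ∈ range m, ((2 * j + m - 1 : ℂ) - i)) * c ^ (2 * (j : ℤ) - 1)) := by
  have hball : ∀ w ∈ closedBall c r, w ≠ 0 := by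
    rintro w hw rfl
    rw [mem_closedBall, dist_comm, dist_zero_right] at hw
    exact hw.not_gt hrc
  have hdiff : DifferentiableOn ℂ (fun w : ℂ => w ^ ((m : ℤ) - 1) * (1 - w ^ 2) ^ k)
      (closedBall c r) := fun w hw =>
    ((differentiableAt_zpow.2 (Or.inl (hball w hw))).mul (by fun_prop)).differentiableWithinAt
  have hc : c ≠ 0 := hball c (mem_closedBall_self hr.le)
  rw [← iteratedDeriv_zpow_sub_one_mul_one_sub_sq_pow hc, ← smul_eq_mul,
    ← hdiff.circleIntegral_one_div_sub_center_pow_smul hr m]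
  congr 1
  funext w
  rw [smul_eq_mul]
  ring

theorem stmt4_general (κ : ℝ) (hκ0 : κ ≠ 0) (k m : ℕ)
    (r : ℝ) (hr : r ∈ Set.Ioo (0 : ℝ) |κ|) :
    (-1 : ℂ) ^ m * ((Ppoly k m (κ ^ 2) : ℝ) : ℂ) =
      ((κ : ℂ) / (2 * Real.pi * Complex.I)) *
        ∮ w in C((κ : ℂ), r), w ^ ((m : ℤ) - 1) * (1 - w ^ 2) ^ k / (w - (κ : ℂ)) ^ (m + 1) := by
  rw [circleIntegral_zpow_sub_one_mul_one_sub_sq_pow_div_sub_pow hr.1 (by simpa using hr.2)]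
  have hpoch (j : ℕ) : ((pochR (2 * j) m : ℝ) : ℂ) = ∏ i ∈ range m, ((2 * j + m - 1 : ℂ) - i) := by
    rw [pochR_eq_prod_range_sub]
    push_cast
    rfl
  have hκpow (j : ℕ) : (κ : ℂ) * (κ : ℂ) ^ (2 * (j : ℤ) - 1) = ((κ : ℂ) ^ 2) ^ j := by
    rw [← zpow_one_add₀ (ofReal_ne_zero.2 hκ0), add_sub_cancel, ← pow_mul, ← zpow_natCast]
    push_cast
    rfl
  calc (-1 : ℂ) ^ m * ((Ppoly k m (κ ^ 2) : ℝ) : ℂ)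
      = (m.factorial : ℂ)⁻¹ * ∑ j ∈ range (k + 1),
          (k.choose j : ℂ) * (-(κ : ℂ) ^ 2) ^ j * ((pochR (2 * j) m : ℝ) : ℂ) := by
        have h := congrArg ((↑) : ℝ → ℂ) (neg_one_pow_mul_Ppoly k m (κ ^ 2))
        push_cast at h
        exact h
    _ = (m.factorial : ℂ)⁻¹ * ∑ j ∈ range (k + 1), (κ : ℂ) * ((-1) ^ j * (k.choose j : ℂ) *
          ((∏ i ∈ range m, ((2 * j + m - 1 : ℂ) - i)) * (κ : ℂ) ^ (2 * (j : ℤ) - 1))) := by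
        refine congrArg _ (sum_congr rfl fun j _ => ?_)
        rw [hpoch, neg_pow, ← hκpow]
        ring
    _ = _ := by
        rw [← mul_sum]
        field_simp

theorem stmt4 (κ : ℝ) (hκ : κ ∈ Set.Ioo (-1 : ℝ) 1) (hκ0 : κ ≠ 0) (k m : ℕ) (hk : 1 ≤ k)
    (r : ℝ) (hr : r ∈ Set.Ioo (0 : ℝ) |κ|) :
    (-1 : ℂ) ^ m * ((Ppoly k m (κ ^ 2) : ℝ) : ℂ) =
      ((κ : ℂ) / (2 * Real.pi * Complex.I)) *
        ∮ w in C((κ : ℂ), r), w ^ ((m : ℤ) - 1) * (1 - w ^ 2) ^ k / (w - (κ : ℂ)) ^ (m + 1) :=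
  stmt4_general κ hκ0 k m r hr
end

section
/- Let κ ∈ ℝ, and let k ≥ 0 and m ≥ 1 be integers. Then (−1)^m P_k^{(m)}(κ²) = (κ/m!) · (d/dw)^m [ w^{m−1}(1−w²)^k ] evaluated at w = κ. -/
open scoped BigOperators

open Polynomial in
lemma iteratedDeriv_polyEval (p : Polynomial ℝ) (n : ℕ) :
    iteratedDeriv n (fun x : ℝ => p.eval x) = fun x => (derivative^[n] p).eval x := by
  induction n with
  | zero => simp
  | succ n ih =>
    rw [iteratedDeriv_succ, ih, Function.iterate_succ_apply']
    funext x
    exact Polynomial.deriv _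

lemma pochR_natCast (a m : ℕ) : pochR a m = (a.ascFactorial m : ℝ) := by
  induction m with
  | zero => simp [pochR]
  | succ m ih =>
    rw [pochR, Finset.prod_range_succ, ← pochR, ih, Nat.ascFactorial_succ]
    push_cast
    ring

theorem stmt5 (κ : ℝ) (k m : ℕ) (hm : 1 ≤ m) :
    (-1 : ℝ) ^ m * Ppoly k m (κ ^ 2) =
      (κ / (m.factorial : ℝ)) *
        iteratedDeriv m (fun w : ℝ => w ^ (m - 1) * (1 - w ^ 2) ^ k) κ := by
  classical
  set p : Polynomial ℝ :=
    ∑ j ∈ Finset.range (k + 1),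
      Polynomial.C ((-1 : ℝ) ^ j * (k.choose j : ℝ)) * Polynomial.X ^ (2 * j + (m - 1)) with hp
  have hfun : (fun w : ℝ => w ^ (m - 1) * (1 - w ^ 2) ^ k) = fun w => p.eval w := by
    funext w
    have hb : (1 - w ^ 2) ^ k = ∑ j ∈ Finset.range (k + 1),
        (-1 : ℝ) ^ j * (k.choose j : ℝ) * w ^ (2 * j) := by
      rw [sub_eq_add_neg, add_comm, add_pow]
      refine Finset.sum_congr rfl fun j hj => ?_
      rw [neg_pow, one_pow, ← pow_mul]
      ring
    rw [hb, Finset.mul_sum]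
    simp only [hp, Polynomial.eval_finset_sum, Polynomial.eval_mul, Polynomial.eval_C,
      Polynomial.eval_pow, Polynomial.eval_X]
    refine Finset.sum_congr rfl fun j hj => ?_
    rw [pow_add]
    ring
  have hder : Polynomial.derivative^[m] p =
      ∑ j ∈ Finset.range (k + 1),
        Polynomial.C ((-1 : ℝ) ^ j * (k.choose j : ℝ) *
          ((2 * j + (m - 1)).descFactorial m : ℝ)) * Polynomial.X ^ (2 * j + (m - 1) - m) := by
    rw [hp, Polynomial.iterate_derivative_sum]
    refine Finset.sum_congr rfl fun j hj => ?_
    rw [Polynomial.iterate_derivative_C_mul, Polynomial.iterate_derivative_X_pow_eq_C_mul,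
      ← mul_assoc, ← Polynomial.C_mul]
  rw [hfun, iteratedDeriv_polyEval, hder]
  simp only [Polynomial.eval_finset_sum, Polynomial.eval_mul, Polynomial.eval_C,
    Polynomial.eval_pow, Polynomial.eval_X]
  rw [Ppoly, Finset.mul_sum, Finset.mul_sum, Finset.mul_sum]
  refine Finset.sum_congr rfl fun j hj => ?_
  rw [← mul_assoc, show (-1 : ℝ) ^ m * ((-1 : ℝ) ^ m / (m.factorial : ℝ)) =
      1 / (m.factorial : ℝ) by rw [← mul_div_assoc, ← pow_add, ← two_mul, pow_mul]; norm_num,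
    div_mul_eq_mul_div, one_mul, div_mul_eq_mul_div]
  congr 1
  rcases Nat.eq_zero_or_pos j with hj0 | hj0
  · subst hj0
    have h1 : pochR 0 m = 0 := by
      apply Finset.prod_eq_zero (Finset.mem_range.mpr (show 0 < m by omega))
      norm_num
    have h2 : (2 * 0 + (m - 1)).descFactorial m = 0 := by
      rw [Nat.descFactorial_eq_zero_iff_lt]; omega
    simp [h1, h2]
    omega
  · have hexp : 2 * j + (m - 1) - m = 2 * j - 1 := by omega
    have hdesc : ((2 * j + (m - 1)).descFactorial m) = (2 * j).ascFactorial m := by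
      rw [show 2 * j + (m - 1) = 2 * j + m - 1 by omega]
      exact Nat.add_descFactorial_eq_ascFactorial' (2 * j) m
    have hk : κ * κ ^ (2 * j - 1) = κ ^ (2 * j) := by
      rw [← pow_succ']
      congr 1
      omega
    rw [hexp, hdesc, show ((2 * (j : ℝ))) = ((2 * j : ℕ) : ℝ) by push_cast; ring, pochR_natCast]
    have hkk : (-(κ ^ 2)) ^ j = (-1 : ℝ) ^ j * κ ^ (2 * j) := by
      rw [neg_pow, ← pow_mul]
    rw [hkk, ← hk]
    ring
end

section
/- Let k ∈ ℤ and t ∈ ℝ. For every complex z with |z−1| < 2 (and z ≠ −1 when k > 0), e^{ktz} (1+z)^{−k} = e^{kt} Σ_{m≥0} L_m^{(−k−m)}(−2kt) · (z−1)^m / 2^{m+k}, the series converging absolutely for |z−1| < 2. -/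
/-!
Put `w = (z - 1) / 2`. Then `1 + z = 2 (1 + w)` and `e^{ktz} = e^{kt} e^{2ktw}`, so the claim is the
generating function `∑ₘ L_m^{(β - m)}(x) wᵐ = e^{-xw} (1 + w)^β` (for `‖w‖ < 1`) at `β = -k`,
`x = -2kt`. That identity is the Cauchy product of the exponential series of `e^{-xw}` with the
binomial series `∑ₙ (β choose n) wⁿ`: since `(-m)_j = (-1)^j j! (m choose j)` and
`(β - n + 1)_n = n! (β choose n)`, the coefficient of `wᵐ` in the product is exactly the sum that
defines `L_m^{(β - m)}(x)`.
-/

open scoped BigOperators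

/-- Generalized Laguerre polynomial `L_n^{(α)}(x)` (real index `α`, possibly negative). -/
noncomputable def Lag (n : ℕ) (α : ℝ) (x : ℝ) : ℝ :=
  (1 / (n.factorial : ℝ)) * ∑ j ∈ Finset.range (n + 1),
    (pochR (-(n : ℝ)) j / (j.factorial : ℝ)) * pochR (α + j + 1) (n - j) * x ^ j

lemma pochR_eq_ascPochhammer_eval (a : ℝ) (n : ℕ) : pochR a n = (ascPochhammer ℝ n).eval a := by
  induction n with
  | zero => simp [pochR]
  | succ n ih => rw [pochR, Finset.prod_range_succ, ← pochR, ih, ascPochhammer_succ_eval]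

lemma pochR_sub_add_one (a : ℝ) (n : ℕ) : pochR (a - n + 1) n = n.factorial * Ring.choose a n := by
  rw [pochR_eq_ascPochhammer_eval, ← Polynomial.ascPochhammer_smeval_eq_eval,
    ← Polynomial.descPochhammer_smeval_eq_ascPochhammer,
    Ring.descPochhammer_eq_factorial_smul_choose, nsmul_eq_mul]

lemma pochR_neg (a : ℝ) (n : ℕ) : pochR (-a) n = (-1) ^ n * pochR (a - n + 1) n := by
  rw [pochR_eq_ascPochhammer_eval, pochR_eq_ascPochhammer_eval,
    ascPochhammer_eval_neg_eq_descPochhammer, descPochhammer_eval_eq_ascPochhammer]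

lemma Lag_sub_eq_sum (β x : ℝ) (m : ℕ) :
    Lag m (β - m) x =
      ∑ j ∈ Finset.range (m + 1), (-x) ^ j / j.factorial * Ring.choose β (m - j) := by
  rw [Lag, Finset.mul_sum]
  refine Finset.sum_congr rfl fun j hj => ?_
  have hjm : j ≤ m := Nat.lt_succ_iff.mp (Finset.mem_range.mp hj)
  have hfirst : pochR (-(m : ℝ)) j = (-1) ^ j * (j.factorial * m.choose j) := by
    rw [pochR_neg, pochR_sub_add_one, Ring.choose_natCast]
  have hsecond : pochR (β - m + j + 1) (m - j) = (m - j).factorial * Ring.choose β (m - j) := by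
    rw [← pochR_sub_add_one, Nat.cast_sub hjm]
    ring_nf
  have hfact : (m.choose j : ℝ) * j.factorial * (m - j).factorial = m.factorial := by
    exact_mod_cast Nat.choose_mul_factorial_mul_factorial hjm
  have hchoose : (m.choose j : ℝ) ≠ 0 := by exact_mod_cast (Nat.choose_pos hjm).ne'
  rw [hfirst, hsecond, neg_pow x, ← hfact]
  field_simp

lemma hasSum_choose_mul_pow_of_norm_lt_one (a : ℂ) {w : ℂ} (hw : ‖w‖ < 1) :
    HasSum (fun n => Ring.choose a n * w ^ n) ((1 + w) ^ a) ∧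
      Summable fun n => ‖Ring.choose a n * w ^ n‖ := by
  have hball : w ∈ Metric.eball (0 : ℂ) 1 := by
    rwa [Metric.mem_eball, edist_zero_right, ← ofReal_norm, ENNReal.ofReal_lt_one]
  have hseries := Complex.one_add_cpow_hasFPowerSeriesOnBall_zero (a := a)
  have hterm (n : ℕ) : binomialSeries ℂ a n (fun _ => w) = Ring.choose a n * w ^ n := by
    rw [binomialSeries, FormalMultilinearSeries.ofScalars_apply_eq, smul_eq_mul]
  have hsum := hseries.hasSum hball
  have hnorm :=
    (binomialSeries ℂ a).summable_norm_apply (Metric.eball_subset_eball hseries.r_le hball)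
  simp only [hterm, zero_add] at hsum hnorm
  exact ⟨hsum, hnorm⟩

lemma hasSum_Lag_sub_mul_pow (β x : ℝ) {w : ℂ} (hw : ‖w‖ < 1) :
    HasSum (fun m : ℕ => (Lag m (β - m) x : ℂ) * w ^ m)
      (Complex.exp (-x * w) * (1 + w) ^ (β : ℂ)) := by
  obtain ⟨hbinom, hbinom_norm⟩ := hasSum_choose_mul_pow_of_norm_lt_one β hw
  have hexp : HasSum (fun j => (-x * w) ^ j / j.factorial) (Complex.exp (-x * w)) := by
    rw [Complex.exp_eq_exp_ℂ]
    exact NormedSpace.expSeries_div_hasSum_exp _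
  have hexp_norm : Summable fun j => ‖(-x * w) ^ j / j.factorial‖ := by
    simpa [norm_div, norm_pow] using Real.summable_pow_div_factorial ‖-x * w‖
  have hprod := hasSum_sum_range_mul_of_summable_norm hexp_norm hbinom_norm
  rw [hexp.tsum_eq, hbinom.tsum_eq] at hprod
  refine hprod.congr_fun fun m => ?_
  rw [Lag_sub_eq_sum]
  push_cast
  rw [Finset.sum_mul]
  refine Finset.sum_congr rfl fun j hj => ?_
  have hjm : j ≤ m := Nat.lt_succ_iff.mp (Finset.mem_range.mp hj)
  rw [← Complex.ofReal_choose, ← pow_mul_pow_sub w hjm]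
  ring

theorem stmt9_general (k : ℤ) (t : ℝ) (z : ℂ) (hz : ‖z - 1‖ < 2) :
    HasSum (fun m : ℕ => Complex.exp ((k : ℂ) * t) *
        ((Lag m (-(k : ℝ) - m) (-2 * k * t) : ℝ) : ℂ) * (z - 1) ^ m / (2 : ℂ) ^ ((m : ℤ) + k))
      (Complex.exp ((k : ℂ) * t * z) * (1 + z) ^ (-k)) := by
  obtain ⟨w, rfl⟩ : ∃ w : ℂ, z = 2 * w + 1 := ⟨(z - 1) / 2, by ring⟩
  have hw : ‖w‖ < 1 := by
    rw [add_sub_cancel_right, norm_mul, Complex.norm_two] at hz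
    linarith
  have hexp : Complex.exp ((k : ℂ) * t) * Complex.exp (-((-2 * k * t : ℝ) : ℂ) * w) =
      Complex.exp ((k : ℂ) * t * (2 * w + 1)) := by
    rw [← Complex.exp_add]
    push_cast
    ring_nf
  have hpow : (1 + w) ^ ((-k : ℝ) : ℂ) = (1 + w) ^ (-k) := by
    rw [← Complex.cpow_intCast]
    push_cast
    rfl
  have hsum : Complex.exp ((k : ℂ) * t) * 2 ^ (-k) *
      (Complex.exp (-((-2 * k * t : ℝ) : ℂ) * w) * (1 + w) ^ ((-k : ℝ) : ℂ)) =
      Complex.exp ((k : ℂ) * t * (2 * w + 1)) * (1 + (2 * w + 1)) ^ (-k) := by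
    rw [← hexp, hpow, show 1 + (2 * w + 1) = 2 * (1 + w) by ring, mul_zpow]
    ring
  rw [← hsum]
  refine ((hasSum_Lag_sub_mul_pow (-k) (-2 * k * t) hw).mul_left _).congr_fun fun m => ?_
  rw [zpow_add₀ two_ne_zero, zpow_natCast, zpow_neg, add_sub_cancel_right, mul_pow]
  field_simp

theorem stmt9 (k : ℤ) (t : ℝ) (z : ℂ) (hz : ‖z - 1‖ < 2)
    (hz1 : 0 < k → z ≠ -1) :
    HasSum (fun m : ℕ => Complex.exp ((k : ℂ) * t) *
        ((Lag m (-(k : ℝ) - m) (-2 * k * t) : ℝ) : ℂ) * (z - 1) ^ m / (2 : ℂ) ^ ((m : ℤ) + k))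
      (Complex.exp ((k : ℂ) * t * z) * (1 + z) ^ (-k)) :=
  stmt9_general k t z hz
end

section
/- Let (b_n)_{n≥0} and (c_n)_{n≥0} be sequences of real numbers. Then b_n = Σ_{k=0}^{n} binom(2n, n−k) c_k for all n ≥ 0 if and only if c_0 = b_0 and, for all n ≥ 1, c_n = Σ_{k=0}^{n} (−1)^{k+n} (2n/(n+k)) binom(n+k, n−k) b_k = Σ_{k=0}^{n} (−1)^{k+n} [ binom(n+k, n−k) + binom(n+k−1, n−k−1) ] b_k. -/
/-!
The matrix `(binom(2n, n - k))` is lower unitriangular, so both directions follow once the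
proposed matrix is shown to be a right inverse of it. Column `m` of that matrix, shifted down
by `m`, has generating function `(1 - x)(1 + x)^(-(2m+1)) = 2(1 + x)^(-(2m+1)) - (1 + x)^(-2m)`;
by Chu–Vandermonde its product with row `n = m + d` is `2 binom(2d - 1, d) - binom(2d, d)`,
which vanishes unless `d = 0`. The two closed forms agree because
`(n + k) binom(n + k - 1, n - k - 1) = (n - k) binom(n + k, n - k)`.
-/

open Finset

section Triangular

variable {R : Type*} [Ring R]

def triangularTransform (A : ℕ → ℕ → R) (c : ℕ → R) (n : ℕ) : R :=
  ∑ k ∈ range (n + 1), A n k * c k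

lemma triangularTransform_injective {A : ℕ → ℕ → R} (hA : ∀ n, A n n = 1) :
    Function.Injective (triangularTransform A) := by
  intro c c' h
  funext n
  induction n using Nat.strong_induction_on with
  | _ n ih =>
    have hn := congrFun h n
    simp only [triangularTransform, sum_range_succ, hA, one_mul] at hn
    rwa [sum_congr rfl fun k hk => by rw [ih k (mem_range.mp hk)], add_right_inj] at hn

lemma triangularTransform_triangularTransform {A B : ℕ → ℕ → R}
    (hAB : ∀ m n, m ≤ n → ∑ k ∈ Icc m n, A n k * B k m = if m = n then 1 else 0) (b : ℕ → R) :
    triangularTransform A (triangularTransform B b) = b := by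
  funext n
  simp only [triangularTransform, mul_sum, ← mul_assoc, range_eq_Ico]
  rw [← sum_Ico_Ico_comm 0 (n + 1) fun m k => A n k * B k m * b m]
  calc ∑ m ∈ Ico 0 (n + 1), ∑ k ∈ Ico m (n + 1), A n k * B k m * b m
      = ∑ m ∈ Ico 0 (n + 1), if m = n then b m else 0 := by
        refine sum_congr rfl fun m hm => ?_
        rw [← sum_mul, Ico_add_one_right_eq_Icc, hAB m n (by grind), ite_mul, one_mul, zero_mul]
    _ = b n := by simp

lemma eq_triangularTransform_iff {A B : ℕ → ℕ → R} (hA : ∀ n, A n n = 1)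
    (hAB : ∀ m n, m ≤ n → ∑ k ∈ Icc m n, A n k * B k m = if m = n then 1 else 0) (b c : ℕ → R) :
    b = triangularTransform A c ↔ c = triangularTransform B b := by
  constructor
  · rintro rfl
    exact triangularTransform_injective hA (triangularTransform_triangularTransform hAB _).symm
  · rintro rfl
    exact (triangularTransform_triangularTransform hAB b).symm

end Triangular

lemma Int.ringChoose_neg_natCast_add_one (b j : ℕ) :
    Ring.choose (-(b + 1 : ℤ)) j = (-1) ^ j * (b + j).choose j := by
  rw [Ring.choose_neg, show (b + 1 : ℤ) + j - 1 = ((b + j : ℕ) : ℤ) by push_cast; ring,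
    Ring.choose_natCast, Units.smul_def, Int.coe_negOnePow_natCast, smul_eq_mul]

lemma sum_range_choose_mul_choose {R : Type*} [CommRing R] [BinomialRing R] (r : R) (N d : ℕ) :
    ∑ i ∈ range (d + 1), Ring.choose r i * N.choose (d - i) = Ring.choose (r + N) d := by
  rw [Ring.add_choose_eq d (Commute.all _ _), Nat.sum_antidiagonal_eq_sum_range_succ_mk]
  simp [Ring.choose_natCast]

-- The `if` encodes `binom(·, j) = 0` for `j < 0`, which truncated subtraction would turn into `j = 0`.
def inverseCoeff (n k : ℕ) : ℤ :=
  (-1) ^ (k + n) * ((n + k).choose (n - k) + if k < n then (n + k - 1).choose (n - k - 1) else 0)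

lemma inverseCoeff_add_left (m i : ℕ) :
    inverseCoeff (m + i) m =
      2 * Ring.choose (-(2 * m + 1 : ℤ)) i - Ring.choose (-(2 * m + 1 : ℤ) + 1) i := by
  rcases i with _ | j
  · simp [inverseCoeff]
  · rw [Ring.choose_succ_succ, show (-(2 * m + 1 : ℤ)) = -((2 * m : ℕ) + 1 : ℤ) by push_cast; ring]
    simp only [Int.ringChoose_neg_natCast_add_one, inverseCoeff]
    rw [if_pos (by omega), show m + (j + 1) - m = j + 1 by omega,
      show m + (j + 1) + m = 2 * m + j + 1 by ring, Nat.add_sub_cancel, Nat.add_sub_cancel,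
      show m + (m + (j + 1)) = 2 * m + (j + 1) by ring, pow_add, pow_mul, ← add_assoc]
    push_cast
    ring

lemma sum_choose_mul_inverseCoeff (m d : ℕ) :
    ∑ i ∈ range (d + 1), ((2 * (m + d)).choose (d - i) : ℤ) * inverseCoeff (m + i) m =
      if d = 0 then 1 else 0 := by
  simp_rw [inverseCoeff_add_left, mul_sub, sum_sub_distrib, mul_left_comm _ (2 : ℤ), ← mul_sum,
    mul_comm ((Nat.choose _ _ : ℤ)), sum_range_choose_mul_choose]
  rcases d with _ | e
  · simp
  · rw [show -(2 * m + 1 : ℤ) + (2 * (m + (e + 1)) : ℕ) = (2 * e + 1 : ℕ) by push_cast; ring,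
      show -(2 * m + 1 : ℤ) + 1 + (2 * (m + (e + 1)) : ℕ) = (2 * e + 1 + 1 : ℕ) by push_cast; ring,
      Ring.choose_natCast, Ring.choose_natCast, Nat.choose_succ_succ (2 * e + 1),
      Nat.choose_symm_half, if_neg (Nat.succ_ne_zero e)]
    push_cast
    ring

lemma sum_Icc_choose_mul_inverseCoeff {m n : ℕ} (h : m ≤ n) :
    ∑ k ∈ Icc m n, ((2 * n).choose (n - k) : ℤ) * inverseCoeff k m = if m = n then 1 else 0 := by
  obtain ⟨d, rfl⟩ := Nat.exists_eq_add_of_le h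
  rw [← Ico_add_one_right_eq_Icc, sum_Ico_eq_sum_range, show m + d + 1 - m = d + 1 by omega]
  simpa only [Nat.add_sub_add_left, left_eq_add] using sum_choose_mul_inverseCoeff m d

lemma add_mul_choose_add_choose {n k : ℕ} (hk : k ≤ n) :
    (n + k) * ((n + k).choose (n - k) + if k < n then (n + k - 1).choose (n - k - 1) else 0) =
      2 * n * (n + k).choose (n - k) := by
  split_ifs with hlt
  · obtain ⟨j, rfl⟩ : ∃ j, n = k + j + 1 := ⟨n - k - 1, by omega⟩
    have pascal := Nat.add_one_mul_choose_eq (2 * k + j) j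
    rw [show k + j + 1 + k - 1 = 2 * k + j by omega, show k + j + 1 - k - 1 = j by omega,
      show k + j + 1 - k = j + 1 by omega, show k + j + 1 + k = 2 * k + j + 1 by omega]
    nlinarith [pascal]
  · obtain rfl : k = n := by omega
    simp [two_mul]

lemma two_mul_div_mul_choose {n k : ℕ} (hk : k ≤ n) (hn : 0 < n) :
    2 * n / ((n : ℝ) + k) * (n + k).choose (n - k) =
      (n + k).choose (n - k) + if k < n then ((n + k - 1).choose (n - k - 1) : ℝ) else 0 := by
  rw [div_mul_eq_mul_div, div_eq_iff (by positivity), mul_comm _ ((n : ℝ) + k)]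
  exact_mod_cast (add_mul_choose_add_choose hk).symm

theorem stmt11 (b c : ℕ → ℝ) :
    (∀ n : ℕ, b n = ∑ k ∈ Finset.range (n + 1), ((2 * n).choose (n - k) : ℝ) * c k) ↔
    (c 0 = b 0 ∧ ∀ n : ℕ, 1 ≤ n →
      (c n = ∑ k ∈ Finset.range (n + 1),
        (-1 : ℝ) ^ (k + n) * (2 * n / ((n : ℝ) + k)) * ((n + k).choose (n - k) : ℝ) * b k) ∧
      (c n = ∑ k ∈ Finset.range (n + 1),
        (-1 : ℝ) ^ (k + n) * (((n + k).choose (n - k) : ℝ) +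
          (if k < n then ((n + k - 1).choose (n - k - 1) : ℝ) else 0)) * b k)) := by
  have key := eq_triangularTransform_iff (A := fun n k => ((2 * n).choose (n - k) : ℝ))
    (B := fun n k => (inverseCoeff n k : ℝ)) (by simp)
    (fun m n h => by exact_mod_cast sum_Icc_choose_mul_inverseCoeff h) b c
  simp only [funext_iff, triangularTransform, inverseCoeff] at key
  push_cast at key
  rw [key]
  constructor
  · intro h
    refine ⟨by simpa using h 0, fun n hn => ⟨(h n).trans (sum_congr rfl fun k hk => ?_), h n⟩⟩
    rw [mul_assoc _ (2 * (n : ℝ) / _), two_mul_div_mul_choose (by grind) hn]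
  · rintro ⟨h0, h⟩ (_ | n)
    · simpa using h0
    · exact (h (n + 1) (by omega)).2
end

section
/- Let κ ∈ (−1,1)∖{0}. Then both complex roots of the quadratic polynomial z ↦ (1−z)² + 4κ²z have modulus 1, and for every z in the open unit disc 𝔻, the value (1−z)² + 4κ²z does not lie in the half-line (−∞, 0] of the real axis. -/
/-- On the monic real quadratic `z² - 2cz + 1` a real value `x` below its minimum `1 - c²` on the
real axis can only be taken off the axis, on the line `Re z = c`, where the value is `1 - ‖z‖²`. -/
theorem Complex.normSq_eq_of_sq_sub_two_mul_add_one_eq_ofReal {c x : ℝ} (hx : x < 1 - c ^ 2)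
    {z : ℂ} (h : z ^ 2 - 2 * c * z + 1 = x) : Complex.normSq z = 1 - x := by
  have hre := congrArg Complex.re h
  have him := congrArg Complex.im h
  simp only [pow_two, Complex.add_re, Complex.sub_re, Complex.mul_re, Complex.add_im,
    Complex.sub_im, Complex.mul_im, Complex.ofReal_re, Complex.ofReal_im, Complex.one_re,
    Complex.one_im, Complex.re_ofNat, Complex.im_ofNat] at hre him
  have hprod : z.im * (z.re - c) = 0 := by linarith
  rw [Complex.normSq_apply]
  rcases mul_eq_zero.1 hprod with hreal | hline
  · rw [hreal] at hre
    nlinarith [sq_nonneg (z.re - c)]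
  · rw [sub_eq_zero.1 hline] at hre ⊢
    linarith

theorem stmt16 (κ : ℝ) (hκ : κ ∈ Set.Ioo (-1 : ℝ) 1) (hκ0 : κ ≠ 0) :
    (∀ z : ℂ, (1 - z) ^ 2 + 4 * (κ : ℂ) ^ 2 * z = 0 → ‖z‖ = 1) ∧
    (∀ z ∈ Metric.ball (0 : ℂ) 1, ∀ x : ℝ, x ≤ 0 →
      (1 - z) ^ 2 + 4 * (κ : ℂ) ^ 2 * z ≠ (x : ℂ)) := by
  set c : ℝ := 1 - 2 * κ ^ 2
  have hpoly (z : ℂ) : (1 - z) ^ 2 + 4 * (κ : ℂ) ^ 2 * z = z ^ 2 - 2 * c * z + 1 := by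
    push_cast [c]; ring
  have hmin : 0 < 1 - c ^ 2 := by
    have hfactor : 1 - c ^ 2 = 4 * κ ^ 2 * (1 - κ ^ 2) := by ring
    rw [hfactor]
    exact mul_pos (by positivity) (by nlinarith [hκ.1, hκ.2])
  have hnormSq {z : ℂ} {x : ℝ} (hx : x ≤ 0) (h : (1 - z) ^ 2 + 4 * (κ : ℂ) ^ 2 * z = x) :
      ‖z‖ ^ 2 = 1 - x := by
    rw [← Complex.normSq_eq_norm_sq, Complex.normSq_eq_of_sq_sub_two_mul_add_one_eq_ofReal
      (by linarith) (hpoly z ▸ h)]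
  refine ⟨fun z hz => ?_, fun z hz x hx h => ?_⟩
  · have hsq := hnormSq le_rfl (by simpa using hz)
    nlinarith [norm_nonneg z]
  · have hsq := hnormSq hx h
    have hlt : ‖z‖ < 1 := by simpa using hz
    nlinarith [norm_nonneg z]
end
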